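/- arXiv:1512.06641 — 4 statements merged into one kernel-verified Lean document; each statement's English description precedes it below -/
import Mathlib

section
/- Under the stated CTMDP assumptions, there exist a real number g* and a function h : S → ℝ, together with a selector f* (i.e., f*(i) ∈ A(i) for every i ∈ S), such that for every i ∈ S: λ·g*·e^{λh(i)} = inf_{a ∈ A(i)} { λ·c(i,a)·e^{λh(i)} + Σ_{j∈S} e^{λh(j)}·q(j|i,a) }, and the infimum is attained at a = f*(i). (Risk-sensitive average cost optimality equation, existence part of Theorem 3.2(a).) -/
/-!
Writing `v = exp (λ h)`, the optimality equation becomes `min_a r i a ⬝ᵥ v = (λ g + M) v i` for the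
rows `r i a = q(·|i,a) + (λ c(i,a) + M) δ_i`, with `M` so large that the rows are nonnegative and
their diagonal entries are at least `1`. So it suffices to find a positive eigenvector of the
monotone, superadditive, positively homogeneous operator `T v i = min_a r i a ⬝ᵥ v`: a nonlinear
Perron–Frobenius theorem. Let `ρ` be the Collatz–Wielandt maximum, the largest `μ` such that
`μ v ≤ T v` for some `v` in the simplex (attained by compactness). Since every selector gives an
irreducible matrix, `T` turns some zero coordinate of a nonnegative vector positive, so iterates of
`T` make any nonzero nonnegative vector positive. If `ρ v ≤ T v` were strict somewhere, then by
superadditivity `T^k (T v - ρ v) ≤ T (T^k v) - ρ T^k v`, so `T^k v` would beat `ρ` everywhere,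
contradicting maximality. Finally `T^k v = ρ^k v` is positive, so `h = log v / λ` is defined.
-/

open Finset Matrix Filter Topology Function

lemma exists_pos_crossing_of_path {S : Type*} {w : S → S → ℝ} (hw : ∀ a b, a ≠ b → 0 ≤ w a b)
    {m : ℕ} {p : Fin (m + 1) → S} (hp : Injective p) {j : S}
    (hpos : 0 < (∏ k : Fin m, w (p k.castSucc) (p k.succ)) * w (p (Fin.last m)) j)
    {Z : Set S} (h0 : p 0 ∈ Z) (hj : j ∉ Z) : ∃ a ∈ Z, ∃ b ∉ Z, 0 < w a b := by
  have hstep_nonneg : ∀ k : Fin m, 0 ≤ w (p k.castSucc) (p k.succ) :=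
    fun k => hw _ _ (hp.ne Fin.castSucc_lt_succ.ne)
  have hprod : 0 < ∏ k : Fin m, w (p k.castSucc) (p k.succ) :=
    (prod_nonneg fun k _ => hstep_nonneg k).lt_of_ne fun h => by simp [← h] at hpos
  have hstep : ∀ k : Fin m, 0 < w (p k.castSucc) (p k.succ) := fun k =>
    (hstep_nonneg k).lt_of_ne (prod_ne_zero_iff.mp hprod.ne' k (mem_univ k)).symm
  by_contra! hclosed
  have hpZ : ∀ k, p k ∈ Z := Fin.induction h0 fun k hk =>
    by_contra fun h => (hclosed _ hk _ h).not_gt (hstep k)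
  exact (hclosed _ (hpZ (Fin.last m)) j hj).not_gt (pos_of_mul_pos_right hpos hprod.le)

lemma mul_le_dotProduct {S : Type*} [Fintype S] {u v : S → ℝ} (hu : 0 ≤ u) (hv : 0 ≤ v)
    (j : S) : u j * v j ≤ u ⬝ᵥ v :=
  single_le_sum (f := fun k => u k * v k) (fun k _ => mul_nonneg (hu k) (hv k)) (mem_univ j)

lemma exists_add_smul_le_of_forall_mul_lt {S : Type*} [Finite S] {ρ : ℝ} {w u : S → ℝ}
    (h : ∀ i, ρ * w i < u i) : ∃ ε > 0, (ρ + ε) • w ≤ u := by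
  have hev : ∀ᶠ ε in 𝓝 (0 : ℝ), ∀ i, (ρ + ε) * w i < u i := eventually_all.2 fun i =>
    ((by fun_prop : Continuous fun ε : ℝ => (ρ + ε) * w i).tendsto' 0 _ (by simp)).eventually_lt_const
      (h i)
  obtain ⟨ε, hε, hεpos⟩ := ((hev.filter_mono nhdsWithin_le_nhds).and self_mem_nhdsWithin).exists
    (f := 𝓝[>] (0 : ℝ))
  exact ⟨ε, hεpos, fun i => (hε i).le⟩

lemma exists_forall_le_of_continuous {S : Type*} [Finite S] {A : S → Type*}
    [∀ i, TopologicalSpace (A i)] [∀ i, CompactSpace (A i)] {g : ∀ i, A i → ℝ}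
    (hg : ∀ i, Continuous (g i)) : ∃ m, ∀ i a, m ≤ g i a := by
  choose m hm using fun i => (isCompact_range (hg i)).bddBelow
  obtain ⟨m₀, hm₀⟩ := Finite.exists_ge m
  exact ⟨m₀, fun i a => (hm₀ i).trans (hm i ⟨a, rfl⟩)⟩

section BellmanOperator

variable {S : Type*} [Fintype S] {A : S → Type*} {r : ∀ i, A i → S → ℝ}

noncomputable def bellmanOp (r : ∀ i, A i → S → ℝ) (v : S → ℝ) : S → ℝ :=
  fun i => ⨅ a, r i a ⬝ᵥ v

def IsIrreducibleFamily (r : ∀ i, A i → S → ℝ) : Prop :=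
  ∀ (f : ∀ i, A i) (Z : Set S) (i j : S), i ∈ Z → j ∉ Z → ∃ a ∈ Z, ∃ b ∉ Z, 0 < r a (f a) b

lemma bellmanOp_smul {s : ℝ} (hs : 0 ≤ s) (v : S → ℝ) : bellmanOp r (s • v) = s • bellmanOp r v :=
  funext fun i => by simp only [bellmanOp, dotProduct_smul, Pi.smul_apply, smul_eq_mul,
    Real.mul_iInf_of_nonneg hs]

lemma self_le_bellmanOp [∀ i, Nonempty (A i)] (hnn : ∀ i a, 0 ≤ r i a)
    (hdiag : ∀ i a, 1 ≤ r i a i) {v : S → ℝ} (hv : 0 ≤ v) : v ≤ bellmanOp r v := fun i => le_ciInf fun a =>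
  (le_mul_of_one_le_left (hv i) (hdiag i a)).trans (mul_le_dotProduct (hnn i a) hv i)

lemma le_iterate_bellmanOp [∀ i, Nonempty (A i)] (hnn : ∀ i a, 0 ≤ r i a)
    (hdiag : ∀ i a, 1 ≤ r i a i) {v : S → ℝ} (hv : 0 ≤ v) (k : ℕ) : v ≤ (bellmanOp r)^[k] v := by
  induction k with
  | zero => exact le_rfl
  | succ k ih =>
    rw [iterate_succ_apply']
    exact ih.trans (self_le_bellmanOp hnn hdiag (hv.trans ih))

variable [∀ i, TopologicalSpace (A i)] [∀ i, CompactSpace (A i)]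

lemma bellmanOp_le (hr : ∀ i, Continuous (r i)) (v : S → ℝ) (i : S) (a : A i) :
    bellmanOp r v i ≤ r i a ⬝ᵥ v :=
  ciInf_le (isCompact_range ((hr i).dotProduct continuous_const)).bddBelow a

lemma le_sum_sum_of_smul_le_bellmanOp (hr : ∀ i, Continuous (r i)) (hnn : ∀ i a, 0 ≤ r i a)
    {μ : ℝ} {v : S → ℝ} (hv : v ∈ stdSimplex ℝ S) (h : μ • v ≤ bellmanOp r v) (a : ∀ i, A i) :
    μ ≤ ∑ i, ∑ j, r i (a i) j :=
  calc μ = ∑ i, μ * v i := by rw [← mul_sum, hv.2, mul_one]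
  _ ≤ ∑ i, r i (a i) ⬝ᵥ v := sum_le_sum fun i _ => (h i).trans (bellmanOp_le hr v i (a i))
  _ ≤ ∑ i, r i (a i) ⬝ᵥ 1 := sum_le_sum fun i _ => dotProduct_le_dotProduct_of_nonneg_left
      (fun j => (mem_Icc_of_mem_stdSimplex hv j).2) (hnn i (a i))
  _ = ∑ i, ∑ j, r i (a i) j := by simp only [dotProduct_one]

variable [∀ i, Nonempty (A i)]

lemma le_bellmanOp_iff (hr : ∀ i, Continuous (r i)) {v w : S → ℝ} :
    w ≤ bellmanOp r v ↔ ∀ i a, w i ≤ r i a ⬝ᵥ v :=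
  ⟨fun h i a => (h i).trans (bellmanOp_le hr v i a), fun h i => le_ciInf (h i)⟩

lemma exists_dotProduct_eq_bellmanOp (hr : ∀ i, Continuous (r i)) (v : S → ℝ) (i : S) :
    ∃ a, r i a ⬝ᵥ v = bellmanOp r v i :=
  (isCompact_range ((hr i).dotProduct continuous_const)).sInf_mem (Set.range_nonempty _)

lemma bellmanOp_add_le (hr : ∀ i, Continuous (r i)) (v w : S → ℝ) :
    bellmanOp r v + bellmanOp r w ≤ bellmanOp r (v + w) := fun i => le_ciInf fun a => by
  rw [dotProduct_add]; exact add_le_add (bellmanOp_le hr v i a) (bellmanOp_le hr w i a)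

lemma bellmanOp_sub_smul_le (hr : ∀ i, Continuous (r i)) {s : ℝ} (hs : 0 ≤ s) (v w : S → ℝ) :
    bellmanOp r (v - s • w) ≤ bellmanOp r v - s • bellmanOp r w := by
  have h := bellmanOp_add_le hr (v - s • w) (s • w)
  rw [sub_add_cancel, bellmanOp_smul hs] at h
  exact le_sub_iff_add_le.mpr h

lemma bellmanOp_mono (hr : ∀ i, Continuous (r i)) (hnn : ∀ i a, 0 ≤ r i a) :
    Monotone (bellmanOp r) := fun v _ hvw i => le_ciInf fun a =>
  (bellmanOp_le hr v i a).trans (dotProduct_le_dotProduct_of_nonneg_left hvw (hnn i a))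

lemma exists_zero_lt_bellmanOp (hr : ∀ i, Continuous (r i)) (hnn : ∀ i a, 0 ≤ r i a)
    (hirr : IsIrreducibleFamily r)
    {v : S → ℝ} (hv : 0 ≤ v) {i j : S} (hi : v i = 0) (hj : 0 < v j) :
    ∃ k, v k = 0 ∧ 0 < bellmanOp r v k := by
  choose f hf using exists_dotProduct_eq_bellmanOp hr v
  obtain ⟨a, ha, b, hb, hab⟩ := hirr f {k | v k = 0} i j hi hj.ne'
  refine ⟨a, ha, ?_⟩
  rw [← hf a]
  exact (mul_pos hab ((hv b).lt_of_ne' hb)).trans_le (mul_le_dotProduct (hnn a (f a)) hv b)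

lemma exists_iterate_bellmanOp_pos (hr : ∀ i, Continuous (r i)) (hnn : ∀ i a, 0 ≤ r i a)
    (hdiag : ∀ i a, 1 ≤ r i a i) (hirr : IsIrreducibleFamily r) {v : S → ℝ} (hv : 0 ≤ v) {j : S}
    (hj : 0 < v j) : ∃ k, ∀ i, 0 < (bellmanOp r)^[k] v i := by
  suffices ∀ n, ∀ v : S → ℝ, 0 ≤ v → 0 < v j → #{i | v i = 0} ≤ n →
      ∃ k, ∀ i, 0 < (bellmanOp r)^[k] v i from this _ v hv hj le_rfl
  intro n
  induction n with
  | zero =>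
    intro v hv _ hzero
    simp only [nonpos_iff_eq_zero, card_eq_zero, filter_eq_empty_iff, mem_univ, true_imp_iff]
      at hzero
    exact ⟨0, fun i => (hv i).lt_of_ne' (hzero (x := i))⟩
  | succ n ih =>
    intro v hv hj hzero
    by_cases! hpos : ∀ i, 0 < v i
    · exact ⟨0, hpos⟩
    obtain ⟨i, hi⟩ := hpos
    obtain ⟨k, hk0, hk⟩ := exists_zero_lt_bellmanOp hr hnn hirr hv (le_antisymm hi (hv i)) hj
    have hle : v ≤ bellmanOp r v := self_le_bellmanOp hnn hdiag hv
    have hfewer : #{i | bellmanOp r v i = 0} < #{i | v i = 0} := by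
      refine card_lt_card ⟨fun l hl => ?_, fun hsub => ?_⟩
      · simp only [mem_filter, Finset.mem_univ, true_and] at hl ⊢
        exact le_antisymm (hl ▸ hle l) (hv l)
      · simpa [hk.ne'] using hsub (by simpa using hk0 : k ∈ ({i | v i = 0} : Finset S))
    obtain ⟨m, hm⟩ := ih (bellmanOp r v) (hv.trans hle) (hj.trans_le (hle j)) (by omega)
    exact ⟨m + 1, by rwa [iterate_succ_apply]⟩

lemma bellmanOp_iterate_sub_smul_le (hr : ∀ i, Continuous (r i)) (hnn : ∀ i a, 0 ≤ r i a)
    {ρ : ℝ} (hρ : 0 ≤ ρ) (v : S → ℝ) (k : ℕ) :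
    (bellmanOp r)^[k] (bellmanOp r v - ρ • v) ≤
      bellmanOp r ((bellmanOp r)^[k] v) - ρ • (bellmanOp r)^[k] v := by
  induction k with
  | zero => exact le_rfl
  | succ k ih =>
    rw [iterate_succ_apply', iterate_succ_apply']
    exact (bellmanOp_mono hr hnn ih).trans (bellmanOp_sub_smul_le hr hρ _ _)

lemma exists_isMax_collatzWielandt [Nonempty S] (hr : ∀ i, Continuous (r i))
    (hnn : ∀ i a, 0 ≤ r i a) (hdiag : ∀ i a, 1 ≤ r i a i) :
    ∃ ρ : ℝ, ∃ v ∈ stdSimplex ℝ S, 1 ≤ ρ ∧ ρ • v ≤ bellmanOp r v ∧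
      ∀ μ : ℝ, ∀ u ∈ stdSimplex ℝ S, 1 ≤ μ → μ • u ≤ bellmanOp r u → μ ≤ ρ := by
  classical
  set K : Set (ℝ × (S → ℝ)) :=
    {p | p.2 ∈ stdSimplex ℝ S ∧ 1 ≤ p.1 ∧ ∀ i a, p.1 * p.2 i ≤ r i a ⬝ᵥ p.2}
  have hK_iff : ∀ p, p ∈ K ↔ p.2 ∈ stdSimplex ℝ S ∧ 1 ≤ p.1 ∧ p.1 • p.2 ≤ bellmanOp r p.2 :=
    fun p => and_congr_right' <| and_congr_right' (le_bellmanOp_iff hr).symm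
  have hK_closed : IsClosed K := by
    simp only [K, Set.ofPred_and, Set.ofPred_forall]
    exact ((isClosed_stdSimplex ℝ S).preimage continuous_snd).inter
      ((isClosed_le continuous_const continuous_fst).inter <| isClosed_iInter fun i =>
        isClosed_iInter fun a => isClosed_le (by fun_prop)
          (continuous_const.dotProduct continuous_snd))
  obtain ⟨a₀⟩ : Nonempty (∀ i, A i) := inferInstance
  have hK_compact : IsCompact K := by
    refine ((isCompact_Icc (a := 1) (b := ∑ i, ∑ j, r i (a₀ i) j)).prod
      (isCompact_stdSimplex ℝ S)).of_isClosed_subset hK_closed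
      fun p hp => ?_
    obtain ⟨hv, hρ, hρv⟩ := (hK_iff p).1 hp
    exact ⟨⟨hρ, le_sum_sum_of_smul_le_bellmanOp hr hnn hv hρv a₀⟩, hv⟩
  have hK_nonempty : K.Nonempty := by
    have he := ite_eq_mem_stdSimplex ℝ (Classical.arbitrary S)
    refine ⟨(1, _), (hK_iff _).2 ⟨he, le_rfl, ?_⟩⟩
    rw [one_smul]
    exact self_le_bellmanOp hnn hdiag he.1
  obtain ⟨⟨ρ, v⟩, hp, hmax⟩ := hK_compact.exists_isMaxOn hK_nonempty continuous_fst.continuousOn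
  obtain ⟨hv, hρ, hρv⟩ := (hK_iff _).1 hp
  exact ⟨ρ, v, hv, hρ, hρv, fun μ u hu hμ hμu => hmax ((hK_iff (μ, u)).2 ⟨hu, hμ, hμu⟩)⟩

lemma bellmanOp_eq_smul_of_isMax (hr : ∀ i, Continuous (r i)) (hnn : ∀ i a, 0 ≤ r i a)
    (hdiag : ∀ i a, 1 ≤ r i a i) (hirr : IsIrreducibleFamily r) {ρ : ℝ} {v : S → ℝ}
    (hv : v ∈ stdSimplex ℝ S) (hρ : 1 ≤ ρ) (hρv : ρ • v ≤ bellmanOp r v)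
    (hmax : ∀ μ : ℝ, ∀ u ∈ stdSimplex ℝ S, 1 ≤ μ → μ • u ≤ bellmanOp r u → μ ≤ ρ) :
    bellmanOp r v = ρ • v := by
  by_contra hne
  obtain ⟨i₀, hi₀⟩ : ∃ i, ρ * v i < bellmanOp r v i := by
    by_contra! h
    exact hne (le_antisymm h hρv)
  obtain ⟨k, hk⟩ := exists_iterate_bellmanOp_pos hr hnn hdiag hirr (sub_nonneg.2 hρv)
    (sub_pos.2 hi₀)
  set w := (bellmanOp r)^[k] v
  have hgap : ∀ i, ρ * w i < bellmanOp r w i := fun i => sub_pos.1 <|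
    (hk i).trans_le (bellmanOp_iterate_sub_smul_le hr hnn (by linarith) v k i)
  obtain ⟨ε, hε, hεw⟩ := exists_add_smul_le_of_forall_mul_lt hgap
  have hvw : v ≤ w := le_iterate_bellmanOp hnn hdiag hv.1 k
  have hsum : 0 < ∑ i, w i := by
    linarith [hv.2, sum_le_sum fun i (_ : i ∈ univ) => hvw i]
  have hnormal : (∑ i, w i)⁻¹ • w ∈ stdSimplex ℝ S :=
    ⟨fun i => mul_nonneg (inv_nonneg.2 hsum.le) ((hv.1 i).trans (hvw i)), by
      simp only [Pi.smul_apply, smul_eq_mul, ← mul_sum, inv_mul_cancel₀ hsum.ne']⟩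
  have := hmax (ρ + ε) _ hnormal (by linarith) (by
    rw [bellmanOp_smul (inv_nonneg.2 hsum.le), smul_comm]
    exact smul_le_smul_of_nonneg_left hεw (inv_nonneg.2 hsum.le))
  linarith

theorem exists_pos_bellmanOp_eq_smul [Nonempty S] (hr : ∀ i, Continuous (r i))
    (hnn : ∀ i a, 0 ≤ r i a) (hdiag : ∀ i a, 1 ≤ r i a i) (hirr : IsIrreducibleFamily r) :
    ∃ (ρ : ℝ) (v : S → ℝ), (∀ i, 0 < v i) ∧ bellmanOp r v = ρ • v := by
  obtain ⟨ρ, v, hv, hρ, hρv, hmax⟩ := exists_isMax_collatzWielandt hr hnn hdiag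
  have heq := bellmanOp_eq_smul_of_isMax hr hnn hdiag hirr hv hρ hρv hmax
  have hiter : ∀ k, (bellmanOp r)^[k] v = ρ ^ k • v := fun k => by
    induction k with
    | zero => simp
    | succ k ih =>
      rw [iterate_succ_apply', ih, bellmanOp_smul (by positivity), heq, smul_smul, pow_succ]
  obtain ⟨j, hj⟩ : ∃ j, 0 < v j := by
    by_contra! h
    linarith [hv.2, sum_nonpos fun i (_ : i ∈ univ) => h i]
  obtain ⟨k, hk⟩ := exists_iterate_bellmanOp_pos hr hnn hdiag hirr hv.1 hj
  refine ⟨ρ, v, fun i => ?_, heq⟩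
  have hki := hk i
  rw [hiter, Pi.smul_apply, smul_eq_mul] at hki
  exact pos_of_mul_pos_right hki (by positivity)

end BellmanOperator

section ShiftedGenerator

variable {S : Type*} [DecidableEq S] {A : S → Type*}

def shiftedGenerator (q : S → ∀ i, A i → ℝ) (d : ∀ i, A i → ℝ) (i : S) (a : A i) : S → ℝ :=
  (fun j => q j i a) + Pi.single i (d i a)

variable {q : S → ∀ i, A i → ℝ} {d : ∀ i, A i → ℝ}

lemma shiftedGenerator_of_ne {i j : S} (a : A i) (hj : j ≠ i) :
    shiftedGenerator q d i a j = q j i a := by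
  simp [shiftedGenerator, hj]

lemma shiftedGenerator_self (i : S) (a : A i) : shiftedGenerator q d i a i = q i i a + d i a := by
  simp [shiftedGenerator]

lemma shiftedGenerator_dotProduct [Fintype S] (i : S) (a : A i) (v : S → ℝ) :
    shiftedGenerator q d i a ⬝ᵥ v = d i a * v i + ∑ j, v j * q j i a := by
  rw [shiftedGenerator, add_dotProduct, single_dotProduct, add_comm]
  simp only [dotProduct, mul_comm (q _ _ _)]

lemma shiftedGenerator_nonneg (hq : ∀ i j (a : A i), j ≠ i → 0 ≤ q j i a)
    (hd : ∀ i a, 0 ≤ q i i a + d i a) (i : S) (a : A i) : 0 ≤ shiftedGenerator q d i a := by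
  intro j
  rcases eq_or_ne j i with rfl | hj
  · rw [Pi.zero_apply, shiftedGenerator_self]; exact hd j a
  · rw [Pi.zero_apply, shiftedGenerator_of_ne a hj]; exact hq i j a hj

lemma continuous_shiftedGenerator [∀ i, TopologicalSpace (A i)]
    (hq : ∀ i j, Continuous fun a : A i => q j i a) (hd : ∀ i, Continuous (d i)) (i : S) :
    Continuous (shiftedGenerator q d i) :=
  (continuous_pi fun j => hq i j).add ((continuous_single i).comp (hd i))

lemma isIrreducibleFamily_shiftedGenerator (hq : ∀ i j (a : A i), j ≠ i → 0 ≤ q j i a)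
    (hirr : ∀ (f : ∀ i, A i) (i j : S), i ≠ j →
      ∃ (m : ℕ) (p : Fin (m + 1) → S), Injective p ∧ p 0 = i ∧
        0 < (∏ k : Fin m, q (p k.succ) (p k.castSucc) (f (p k.castSucc))) *
              q j (p (Fin.last m)) (f (p (Fin.last m)))) :
    IsIrreducibleFamily (shiftedGenerator q d) := by
  intro f Z i j hi hj
  obtain ⟨m, p, hp, rfl, hpos⟩ := hirr f _ j (ne_of_mem_of_not_mem hi hj)
  obtain ⟨a, ha, b, hb, hab⟩ := exists_pos_crossing_of_path
    (w := fun a b => q b a (f a)) (fun a b hab => hq a b (f a) hab.symm) hp hpos hi hj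
  exact ⟨a, ha, b, hb, shiftedGenerator_of_ne (f a) (ne_of_mem_of_not_mem ha hb).symm ▸ hab⟩

end ShiftedGenerator

theorem stmt0_general {S : Type*} [Fintype S] [DecidableEq S] [Nonempty S]
    {A : S → Type*} [∀ i, TopologicalSpace (A i)] [∀ i, CompactSpace (A i)]
    [∀ i, Nonempty (A i)]
    (lam : ℝ) (hlam : 0 < lam)
    (q : S → ∀ i : S, A i → ℝ) (c : ∀ i : S, A i → ℝ)
    (hq_nonneg : ∀ (i j : S) (a : A i), j ≠ i → 0 ≤ q j i a)
    (hq_cont : ∀ i j : S, Continuous fun a : A i => q j i a)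
    (hc_cont : ∀ i : S, Continuous (c i))
    (hirr : ∀ (f : ∀ i, A i) (i j : S), i ≠ j →
      ∃ (m : ℕ) (p : Fin (m + 1) → S), Function.Injective p ∧ p 0 = i ∧
        0 < (∏ k : Fin m, q (p k.succ) (p k.castSucc) (f (p k.castSucc))) *
              q j (p (Fin.last m)) (f (p (Fin.last m)))) :
    ∃ (gs : ℝ) (h : S → ℝ) (fs : ∀ i, A i), ∀ i : S,
      (lam * gs * Real.exp (lam * h i) =
        ⨅ a : A i, (lam * c i a * Real.exp (lam * h i) +
          ∑ j, Real.exp (lam * h j) * q j i a)) ∧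
      lam * c i (fs i) * Real.exp (lam * h i) +
          ∑ j, Real.exp (lam * h j) * q j i (fs i) =
        lam * gs * Real.exp (lam * h i) := by
  obtain ⟨m, hm⟩ := exists_forall_le_of_continuous (g := fun i a => q i i a + lam * c i a)
    fun i => (hq_cont i i).add (continuous_const.mul (hc_cont i))
  set d : ∀ i, A i → ℝ := fun i a => lam * c i a + (1 - m)
  have hd : ∀ i a, 1 ≤ q i i a + d i a := fun i a => by linarith [hm i a]
  have hr_cont : ∀ i, Continuous (shiftedGenerator q d i) :=
    continuous_shiftedGenerator hq_cont fun i => by fun_prop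
  obtain ⟨ρ, v, hv, hρv⟩ := exists_pos_bellmanOp_eq_smul hr_cont
    (shiftedGenerator_nonneg hq_nonneg fun i a => zero_le_one.trans (hd i a))
    (fun i a => shiftedGenerator_self (q := q) i a ▸ hd i a)
    (isIrreducibleFamily_shiftedGenerator hq_nonneg hirr)
  have hρv' : ∀ i, bellmanOp (shiftedGenerator q d) v i = ρ * v i := fun i => congrFun hρv i
  choose fs hfs using exists_dotProduct_eq_bellmanOp hr_cont v
  have hfs_val : ∀ i, lam * c i (fs i) * v i + ∑ j, v j * q j i (fs i) = (ρ - (1 - m)) * v i :=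
    fun i => by linarith [shiftedGenerator_dotProduct (q := q) (d := d) i (fs i) v, hfs i, hρv' i]
  have hleast : ∀ i, IsLeast (Set.range fun a => lam * c i a * v i + ∑ j, v j * q j i a)
      ((ρ - (1 - m)) * v i) := fun i => by
    refine ⟨⟨fs i, hfs_val i⟩, ?_⟩
    rintro _ ⟨a, rfl⟩
    linarith [shiftedGenerator_dotProduct (q := q) (d := d) i a v, bellmanOp_le hr_cont v i a,
      hρv' i]
  refine ⟨(ρ - (1 - m)) / lam, fun j => Real.log (v j) / lam, fs, fun i => ?_⟩
  simp only [mul_div_cancel₀ _ hlam.ne', Real.exp_log (hv _)]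
  exact ⟨(hleast i).isGLB.ciInf_eq.symm, hfs_val i⟩

/-- **Theorem 3.2(a), existence part**: under the CTMDP assumptions (finite state space `S`,
compact metrizable nonempty action sets `A i`, continuous bounded cost and transition rates
with `q(j|i,a) ≥ 0` for `j ≠ i` and `Σ_j q(j|i,a) = 0`, irreducibility, and risk-sensitivity
coefficient `λ > 0`), there exist `g* ∈ ℝ`, `h : S → ℝ` and a selector `f*` such that for
every `i ∈ S`,
`λ g* e^{λ h(i)} = inf_{a ∈ A(i)} { λ c(i,a) e^{λ h(i)} + Σ_j e^{λ h(j)} q(j|i,a) }`,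
the infimum being attained at `a = f*(i)`. -/
theorem stmt0 {S : Type*} [Fintype S] [DecidableEq S] [Nonempty S]
    {A : S → Type*} [∀ i, TopologicalSpace (A i)] [∀ i, CompactSpace (A i)]
    [∀ i, Nonempty (A i)] [∀ i, TopologicalSpace.MetrizableSpace (A i)]
    (lam : ℝ) (hlam : 0 < lam)
    (q : S → ∀ i : S, A i → ℝ) (c : ∀ i : S, A i → ℝ)
    (hq_nonneg : ∀ (i j : S) (a : A i), j ≠ i → 0 ≤ q j i a)
    (hq_sum : ∀ (i : S) (a : A i), ∑ j, q j i a = 0)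
    (hq_cont : ∀ i j : S, Continuous fun a : A i => q j i a)
    (hc_cont : ∀ i : S, Continuous (c i))
    (hirr : ∀ (f : ∀ i, A i) (i j : S), i ≠ j →
      ∃ (m : ℕ) (p : Fin (m + 1) → S), Function.Injective p ∧ p 0 = i ∧
        0 < (∏ k : Fin m, q (p k.succ) (p k.castSucc) (f (p k.castSucc))) *
              q j (p (Fin.last m)) (f (p (Fin.last m)))) :
    ∃ (gs : ℝ) (h : S → ℝ) (fs : ∀ i, A i), ∀ i : S,
      (lam * gs * Real.exp (lam * h i) =
        ⨅ a : A i, (lam * c i a * Real.exp (lam * h i) +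
          ∑ j, Real.exp (lam * h j) * q j i a)) ∧
      lam * c i (fs i) * Real.exp (lam * h i) +
          ∑ j, Real.exp (lam * h j) * q j i (fs i) =
        lam * gs * Real.exp (lam * h i) :=
  stmt0_general lam hlam q c hq_nonneg hq_cont hc_cont hirr
end

section
/- Let S be a finite set, λ > 0, g ∈ ℝ, h : S → ℝ, i ∈ S, c_i ∈ ℝ, and let (q_j)_{j∈S} be real numbers with q_j ≥ 0 for all j ≠ i and Σ_{j∈S} q_j = 0. Define Q := ∫₀^∞ exp((λ(c_i − g) + q_i)·s) ds ∈ (0,∞]. If e^{λh(i)} ≤ Q·Σ_{j∈S, j≠i} e^{λh(j)}·q_j holds in [0,∞] (with the convention 0·∞ = 0), then λ·c_i·e^{λh(i)} + Σ_{j∈S} e^{λh(j)}·q_j ≥ λ·g·e^{λh(i)}. (Inequality (w-3) in the proof of Theorem 3.2(a): any solution of the first-passage form of the optimality equation is a subsolution of the risk-sensitive average cost optimality equation at every state-action pair.) -/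
/-!
Write `a = λ(cᵢ - g) + qᵢ`, `E = e^{λ h(i)}` and `T = Σ_{j ≠ i} e^{λ h(j)} q_j ≥ 0`. Splitting off the
`j = i` term, the claim is `-a E ≤ T`. This is trivial when `a ≥ 0`; when `a < 0` the integral is
`Q = 1/(-a)` and the hypothesis reads `E ≤ T / (-a)`.
-/

open MeasureTheory Set
open scoped ENNReal

theorem lintegral_exp_mul_Ioi_zero_of_neg {a : ℝ} (ha : a < 0) :
    ∫⁻ s in Ioi (0 : ℝ), ENNReal.ofReal (Real.exp (a * s)) = ENNReal.ofReal (-a)⁻¹ := by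
  rw [← ofReal_integral_eq_lintegral_ofReal (integrableOn_exp_mul_Ioi ha 0)
    (.of_forall fun _ ↦ (Real.exp_pos _).le), integral_exp_mul_Ioi ha 0]
  simp [neg_div, inv_neg]

theorem neg_mul_le_of_ofReal_le_lintegral_exp_mul {a E T : ℝ} (hE : 0 ≤ E) (hT : 0 ≤ T)
    (h : ENNReal.ofReal E ≤
      (∫⁻ s in Ioi (0 : ℝ), ENNReal.ofReal (Real.exp (a * s))) * ENNReal.ofReal T) :
    -a * E ≤ T := by
  rcases le_or_gt 0 a with ha | ha
  · nlinarith
  have hinv : 0 ≤ (-a)⁻¹ := inv_nonneg.mpr (by linarith)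
  rw [lintegral_exp_mul_Ioi_zero_of_neg ha, ← ENNReal.ofReal_mul hinv,
    ENNReal.ofReal_le_ofReal_iff (mul_nonneg hinv hT)] at h
  calc -a * E ≤ -a * ((-a)⁻¹ * T) := by gcongr; linarith
    _ = T := by rw [← mul_assoc, mul_inv_cancel₀ (by linarith), one_mul]

theorem stmt4_general {S : Type*} [Fintype S] [DecidableEq S]
    (lam : ℝ) (g : ℝ) (h : S → ℝ) (i : S) (ci : ℝ) (q : S → ℝ)
    (hq_nonneg : ∀ j, j ≠ i → 0 ≤ q j)
    (hle : ENNReal.ofReal (Real.exp (lam * h i)) ≤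
      (∫⁻ s in Ioi (0 : ℝ), ENNReal.ofReal (Real.exp ((lam * (ci - g) + q i) * s))) *
        ∑ j ∈ Finset.univ.erase i,
          ENNReal.ofReal (Real.exp (lam * h j)) * ENNReal.ofReal (q j)) :
    lam * g * Real.exp (lam * h i) ≤
      lam * ci * Real.exp (lam * h i) + ∑ j, Real.exp (lam * h j) * q j := by
  have hterm_nonneg : ∀ j ∈ Finset.univ.erase i, 0 ≤ Real.exp (lam * h j) * q j :=
    fun j hj ↦ mul_nonneg (Real.exp_pos _).le (hq_nonneg j (Finset.ne_of_mem_erase hj))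
  rw [Finset.sum_congr rfl fun j _ ↦ (ENNReal.ofReal_mul (Real.exp_pos _).le).symm,
    ← ENNReal.ofReal_sum_of_nonneg hterm_nonneg] at hle
  have key := neg_mul_le_of_ofReal_le_lintegral_exp_mul (Real.exp_pos _).le
    (Finset.sum_nonneg hterm_nonneg) hle
  rw [← Finset.add_sum_erase _ _ (Finset.mem_univ i)]
  linarith

/-- **Inequality (w-3)**: if `e^{λ h(i)} ≤ Q · Σ_{j ≠ i} e^{λ h(j)} q_j` in `[0,∞]`
(convention `0·∞ = 0`), where `Q = ∫₀^∞ e^{(λ(c_i − g) + q_i) s} ds`, then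
`λ c_i e^{λ h(i)} + Σ_j e^{λ h(j)} q_j ≥ λ g e^{λ h(i)}`. -/
theorem stmt4 {S : Type*} [Fintype S] [DecidableEq S]
    (lam : ℝ) (hlam : 0 < lam) (g : ℝ) (h : S → ℝ) (i : S) (ci : ℝ) (q : S → ℝ)
    (hq_nonneg : ∀ j, j ≠ i → 0 ≤ q j) (hq_sum : ∑ j, q j = 0)
    (hle : ENNReal.ofReal (Real.exp (lam * h i)) ≤
      (∫⁻ s in Ioi (0 : ℝ), ENNReal.ofReal (Real.exp ((lam * (ci - g) + q i) * s))) *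
        ∑ j ∈ Finset.univ.erase i,
          ENNReal.ofReal (Real.exp (lam * h j)) * ENNReal.ofReal (q j)) :
    lam * g * Real.exp (lam * h i) ≤
      lam * ci * Real.exp (lam * h i) + ∑ j, Real.exp (lam * h j) * q j :=
  stmt4_general lam g h i ci q hq_nonneg hle
end

section
/- Let S be a finite set, λ > 0, g ∈ ℝ, h : S → ℝ, i ∈ S, c_i ∈ ℝ, and let (q_j)_{j∈S} be real numbers with q_j ≥ 0 for all j ≠ i and Σ_{j∈S} q_j = 0, and suppose q_j > 0 for at least one j ≠ i. Define Q := ∫₀^∞ exp((λ(c_i − g) + q_i)·s) ds ∈ (0,∞]. If e^{λh(i)} = Q·Σ_{j∈S, j≠i} e^{λh(j)}·q_j holds in [0,∞], then Q < ∞ (equivalently λ(c_i − g) + q_i < 0) and λ·g·e^{λh(i)} = λ·c_i·e^{λh(i)} + Σ_{j∈S} e^{λh(j)}·q_j. (Identity (w-1) in the proof of Theorem 3.2(a): a minimizer of the first-passage form of the optimality equation yields equality in the risk-sensitive average cost optimality equation.) -/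
/-!
With `a = λ(c_i − g) + q_i`, the integral `∫₀^∞ e^{a s} ds` is `-1/a` when `a < 0` and `∞`
otherwise. The right-hand side of the hypothesis multiplies it by `Σ_{j ≠ i} e^{λh(j)} q_j`, which
is strictly positive, so finiteness of the left-hand side forces `a < 0`. The hypothesis then reads
`-a · e^{λh(i)} = Σ_{j ≠ i} e^{λh(j)} q_j`, which is the claimed identity after moving the `j = i`
term `e^{λh(i)} q_i` to the right.
-/

open MeasureTheory Set
open scoped ENNReal

lemma lintegral_exp_mul_Ioi_of_neg {a : ℝ} (ha : a < 0) (c : ℝ) :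
    ∫⁻ x in Ioi c, ENNReal.ofReal (Real.exp (a * x)) = ENNReal.ofReal (-Real.exp (a * c) / a) := by
  rw [← integral_exp_mul_Ioi ha c, ofReal_integral_eq_lintegral_ofReal
    (integrableOn_exp_mul_Ioi ha c) (ae_of_all _ fun _ => (Real.exp_pos _).le)]

lemma lintegral_exp_mul_Ioi_eq_top_of_nonneg {a : ℝ} (ha : 0 ≤ a) (c : ℝ) :
    ∫⁻ x in Ioi c, ENNReal.ofReal (Real.exp (a * x)) = ∞ := by
  refine top_le_iff.1 ?_
  calc ∞ = ∫⁻ _ in Ioi c, ENNReal.ofReal (Real.exp (a * c)) := by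
        simp [Real.volume_Ioi, Real.exp_pos]
    _ ≤ ∫⁻ x in Ioi c, ENNReal.ofReal (Real.exp (a * x)) :=
        setLIntegral_mono (by fun_prop) fun x hx =>
          ENNReal.ofReal_le_ofReal (Real.exp_le_exp.2 (mul_le_mul_of_nonneg_left (le_of_lt hx) ha))

lemma lintegral_exp_mul_Ioi_lt_top_iff {a : ℝ} (c : ℝ) :
    ∫⁻ x in Ioi c, ENNReal.ofReal (Real.exp (a * x)) < ∞ ↔ a < 0 := by
  refine ⟨fun hfin => not_le.1 fun ha => ?_, fun ha => ?_⟩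
  · rw [lintegral_exp_mul_Ioi_eq_top_of_nonneg ha] at hfin
    exact lt_irrefl _ hfin
  · rw [lintegral_exp_mul_Ioi_of_neg ha]
    exact ENNReal.ofReal_lt_top

theorem stmt5_general {S : Type*} [Fintype S] [DecidableEq S]
    (lam : ℝ) (g : ℝ) (h : S → ℝ) (i : S) (ci : ℝ) (q : S → ℝ)
    (hq_nonneg : ∀ j, j ≠ i → 0 ≤ q j)
    (hq_pos : ∃ j, j ≠ i ∧ 0 < q j)
    (heq : ENNReal.ofReal (Real.exp (lam * h i)) =
      (∫⁻ s in Ioi (0 : ℝ), ENNReal.ofReal (Real.exp ((lam * (ci - g) + q i) * s))) *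
        ∑ j ∈ Finset.univ.erase i,
          ENNReal.ofReal (Real.exp (lam * h j)) * ENNReal.ofReal (q j)) :
    (∫⁻ s in Ioi (0 : ℝ), ENNReal.ofReal (Real.exp ((lam * (ci - g) + q i) * s))) < ∞ ∧
    lam * (ci - g) + q i < 0 ∧
    lam * g * Real.exp (lam * h i) =
      lam * ci * Real.exp (lam * h i) + ∑ j, Real.exp (lam * h j) * q j := by
  set a := lam * (ci - g) + q i
  set E := ∑ j ∈ Finset.univ.erase i, Real.exp (lam * h j) * q j
  have hterm_nonneg : ∀ j ∈ Finset.univ.erase i, 0 ≤ Real.exp (lam * h j) * q j := fun j hj =>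
    mul_nonneg (Real.exp_pos _).le (hq_nonneg j (Finset.ne_of_mem_erase hj))
  have hE_pos : 0 < E := by
    obtain ⟨j, hji, hqj⟩ := hq_pos
    exact Finset.sum_pos' hterm_nonneg ⟨j, Finset.mem_erase.2 ⟨hji, Finset.mem_univ j⟩,
      mul_pos (Real.exp_pos _) hqj⟩
  rw [← Finset.sum_congr rfl fun j _ => ENNReal.ofReal_mul (Real.exp_pos (lam * h j)).le,
    ← ENNReal.ofReal_sum_of_nonneg hterm_nonneg] at heq
  have hQ_fin : (∫⁻ s in Ioi (0 : ℝ), ENNReal.ofReal (Real.exp (a * s))) < ∞ := by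
    refine lt_top_iff_ne_top.2 fun hQ => ENNReal.ofReal_ne_top (heq.trans ?_)
    rw [hQ, ENNReal.top_mul (ENNReal.ofReal_pos.2 hE_pos).ne']
  have ha : a < 0 := (lintegral_exp_mul_Ioi_lt_top_iff 0).1 hQ_fin
  refine ⟨hQ_fin, ha, ?_⟩
  have hcoef : 0 ≤ -1 / a := div_nonneg_of_nonpos (by norm_num) ha.le
  rw [lintegral_exp_mul_Ioi_of_neg ha, mul_zero, Real.exp_zero, ← ENNReal.ofReal_mul hcoef,
    ENNReal.ofReal_eq_ofReal_iff (Real.exp_pos _).le (mul_nonneg hcoef hE_pos.le)] at heq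
  have hkey : -a * Real.exp (lam * h i) = E := by
    rw [heq]
    field_simp [ha.ne]
  rw [← Finset.add_sum_erase _ _ (Finset.mem_univ i)]
  linear_combination hkey

/-- **Identity (w-1)**: if `e^{λ h(i)} = Q · Σ_{j ≠ i} e^{λ h(j)} q_j` in `[0,∞]`, where
`Q = ∫₀^∞ e^{(λ(c_i − g) + q_i) s} ds` and `q_j > 0` for at least one `j ≠ i`, then
`Q < ∞` (equivalently `λ(c_i − g) + q_i < 0`) and
`λ g e^{λ h(i)} = λ c_i e^{λ h(i)} + Σ_j e^{λ h(j)} q_j`. -/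
theorem stmt5 {S : Type*} [Fintype S] [DecidableEq S]
    (lam : ℝ) (hlam : 0 < lam) (g : ℝ) (h : S → ℝ) (i : S) (ci : ℝ) (q : S → ℝ)
    (hq_nonneg : ∀ j, j ≠ i → 0 ≤ q j) (hq_sum : ∑ j, q j = 0)
    (hq_pos : ∃ j, j ≠ i ∧ 0 < q j)
    (heq : ENNReal.ofReal (Real.exp (lam * h i)) =
      (∫⁻ s in Ioi (0 : ℝ), ENNReal.ofReal (Real.exp ((lam * (ci - g) + q i) * s))) *
        ∑ j ∈ Finset.univ.erase i,
          ENNReal.ofReal (Real.exp (lam * h j)) * ENNReal.ofReal (q j)) :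
    (∫⁻ s in Ioi (0 : ℝ), ENNReal.ofReal (Real.exp ((lam * (ci - g) + q i) * s))) < ∞ ∧
    lam * (ci - g) + q i < 0 ∧
    lam * g * Real.exp (lam * h i) =
      lam * ci * Real.exp (lam * h i) + ∑ j, Real.exp (lam * h j) * q j :=
  stmt5_general lam g h i ci q hq_nonneg hq_pos heq
end

section
/- For every g ∈ ℝ the first-passage values v_g(i) := E_i[W_g] ∈ [0,∞] of the jump chain satisfy the system: for every i ∈ S with i ≠ z, v_g(i) = Q(i,g)·( q(z|i) + Σ_{j ∈ S∖{i,z}} v_g(j)·q(j|i) ), and v_g(z) = Q(z,g)·Σ_{j ∈ S∖{z}} v_g(j)·q(j|z), as identities in [0,∞] with the convention 0·∞ = 0, where Q(i,g) := ∫₀^∞ exp( (λ(c(i) − g) + q(i|i))·s ) ds ∈ (0,∞]. (Theorem 3.1(b).) -/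
open MeasureTheory Filter Set
open scoped ENNReal

noncomputable section

namespace RiskCTMDP8
set_option linter.unusedSectionVars false
set_option linter.unusedVariables false

variable {S : Type*} [Fintype S] [DecidableEq S] [MeasurableSpace S]
  [MeasurableSingletonClass S]

/-- Exponential distribution with rate `r`, as a measure on `ℝ` supported on `(0,∞)`. -/
def expM (r : ℝ) : Measure ℝ :=
  (volume.restrict (Ioi (0 : ℝ))).withDensity fun t => ENNReal.ofReal (r * Real.exp (-(r * t)))

/-- Law of a coordinate `(X_m, θ_{m+1})` of the jump chain when `X_m = j` is deterministic:
the state is `j` and the holding time is exponential with rate `−q(j|j)`. -/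
def initM (q : S → S → ℝ) (j : S) : Measure (S × ℝ) :=
  (expM (-(q j j))).map fun t => (j, t)

/-- One-step transition law of the jump chain out of state `x`: jump to `j ≠ x` with
probability `−q(j|x)/q(x|x)`, then hold an independent `Exp(−q(j|j))` time. -/
def stepM (q : S → S → ℝ) (x : S) : Measure (S × ℝ) :=
  ∑ j ∈ Finset.univ.erase x, ENNReal.ofReal (q j x / -(q x x)) • initM q j

/-- `P` is the family of laws (as given by the Ionescu–Tulcea construction) of the jump chain
`((X_m)_{m≥0}, (θ_m)_{m≥1})` with transition rates `q`, coordinate `m` being `(X_m, θ_{m+1})`: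
each `P i` is a probability measure, the zeroth coordinate has law `initM q i`, and the
(one-step) Markov property with transition kernel `stepM q` holds. -/
def IsJumpChainLaw (q : S → S → ℝ) (P : S → Measure (ℕ → S × ℝ)) : Prop :=
  (∀ i, IsProbabilityMeasure (P i)) ∧
  (∀ i, (P i).map (fun ω => ω 0) = initM q i) ∧
  (∀ (i : S) (m : ℕ) (φ : (ℕ → S × ℝ) → ℝ≥0∞) (ψ : S × ℝ → ℝ≥0∞),
    Measurable φ → Measurable ψ →
    (∀ ω ω' : ℕ → S × ℝ, (∀ k ≤ m, ω k = ω' k) → φ ω = φ ω') →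
    ∫⁻ ω, φ ω * ψ (ω (m + 1)) ∂(P i) =
      ∫⁻ ω, φ ω * ∫⁻ y, ψ y ∂(stepM q (ω m).1) ∂(P i))

open Classical in
/-- The first-passage exponential functional
`W_g = exp(λ Σ_{m=0}^{N−1} (c(X_m) − g) θ_{m+1})` on `{N < ∞}` (where
`N = inf{m ≥ 1 : X_m = z}`), and the corresponding `limsup` on `{N = ∞}`, valued in `[0,∞]`. -/
def W (z : S) (lam : ℝ) (c : S → ℝ) (g : ℝ) (ω : ℕ → S × ℝ) : ℝ≥0∞ :=
  if h : ∃ m, 1 ≤ m ∧ (ω m).1 = z then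
    ENNReal.ofReal (Real.exp (lam *
      ∑ m ∈ Finset.range (Nat.find h), (c (ω m).1 - g) * (ω m).2))
  else
    limsup (fun n => ENNReal.ofReal (Real.exp (lam *
      ∑ m ∈ Finset.range n, (c (ω m).1 - g) * (ω m).2))) atTop

/-- `Q(i,g) = ∫₀^∞ exp((λ(c(i) − g) + q(i|i)) s) ds ∈ (0,∞]`. -/
def Qint (lam : ℝ) (c : S → ℝ) (q : S → S → ℝ) (i : S) (g : ℝ) : ℝ≥0∞ :=
  ∫⁻ s in Ioi (0 : ℝ), ENNReal.ofReal (Real.exp ((lam * (c i - g) + q i i) * s))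

/-! ### auxiliary -/

def shift (ω : ℕ → S × ℝ) : ℕ → S × ℝ := fun k => ω (k + 1)

lemma measurable_shift : Measurable (shift (S := S)) :=
  measurable_pi_lambda _ fun k => measurable_pi_apply (k + 1)

lemma measurable_coord (m : ℕ) : Measurable fun ω : ℕ → S × ℝ => ω m :=
  measurable_pi_apply m

lemma measurable_pair (j : S) : Measurable fun t : ℝ => (j, t) :=
  measurable_const.prodMk measurable_id

lemma expM_univ_ne_top {r : ℝ} (hr : 0 < r) : expM r univ ≠ ∞ := by
  rw [expM, withDensity_apply _ MeasurableSet.univ, Measure.restrict_univ]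
  have hint : Integrable (fun t => r * Real.exp (-(r * t)))
      (volume.restrict (Ioi (0 : ℝ))) := by
    have h := (exp_neg_integrableOn_Ioi 0 hr).const_mul r
    simpa [neg_mul] using h
  rw [← ofReal_integral_eq_lintegral_ofReal hint
    (Filter.Eventually.of_forall fun t => mul_nonneg hr.le (Real.exp_nonneg _))]
  exact ENNReal.ofReal_ne_top

lemma lintegral_initM {q : S → S → ℝ} (j : S) {F : S × ℝ → ℝ≥0∞} (hF : Measurable F) :
    ∫⁻ y, F y ∂initM q j = ∫⁻ t, F (j, t) ∂expM (-(q j j)) := by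
  rw [initM, lintegral_map hF (measurable_pair j)]

lemma lintegral_initM_mul {q : S → S → ℝ} (j : S) {F : S × ℝ → ℝ≥0∞}
    (hF : Measurable F) (G : S → ℝ≥0∞) :
    ∫⁻ y, F y * G y.1 ∂initM q j = (∫⁻ y, F y ∂initM q j) * G j := by
  rw [lintegral_initM j (F := fun y => F y * G y.1)
    (hF.mul ((measurable_of_countable G).comp measurable_fst)), lintegral_initM j hF]
  exact lintegral_mul_const (G j) (f := fun t => F (j, t)) (hF.comp (measurable_pair j))

lemma lintegral_stepM {q : S → S → ℝ} (x : S) (F : S × ℝ → ℝ≥0∞) :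
    ∫⁻ y, F y ∂stepM q x
      = ∑ j ∈ Finset.univ.erase x,
          ENNReal.ofReal (q j x / -(q x x)) * ∫⁻ y, F y ∂initM q j := by
  rw [stepM, lintegral_finset_sum_measure]
  exact Finset.sum_congr rfl fun j _ => lintegral_smul_measure _ _


def Kfun (q : S → S → ℝ) : ℕ → (ℕ → S × ℝ → ℝ≥0∞) → S → ℝ≥0∞
  | 0, _, _ => 1
  | n + 1, ψ, x => ∫⁻ y, ψ 0 y * Kfun q n (fun k => ψ (k + 1)) y.1 ∂stepM q x

variable {q : S → S → ℝ} {P : S → Measure (ℕ → S × ℝ)}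

lemma markov_prod (hP : IsJumpChainLaw q P) (n : ℕ) :
    ∀ (ψ : ℕ → S × ℝ → ℝ≥0∞), (∀ k, Measurable (ψ k)) →
    ∀ (m : ℕ) (i : S) (φ : (ℕ → S × ℝ) → ℝ≥0∞), Measurable φ →
    (∀ ω ω' : ℕ → S × ℝ, (∀ k ≤ m, ω k = ω' k) → φ ω = φ ω') →
    ∫⁻ ω, φ ω * ∏ k ∈ Finset.range n, ψ k (ω (m + 1 + k)) ∂P i
      = ∫⁻ ω, φ ω * Kfun q n ψ (ω m).1 ∂P i := by
  induction n with
  | zero => intro ψ hψ m i φ hφ hloc; simp [Kfun]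
  | succ n ih =>
    intro ψ hψ m i φ hφ hloc
    have hK : Measurable fun y : S × ℝ => ψ 0 y * Kfun q n (fun k => ψ (k + 1)) y.1 :=
      (hψ 0).mul ((measurable_of_countable _).comp measurable_fst)
    have key := hP.2.2 i m φ
      (fun y => ψ 0 y * Kfun q n (fun k => ψ (k + 1)) y.1) hφ hK hloc
    calc ∫⁻ ω, φ ω * ∏ k ∈ Finset.range (n + 1), ψ k (ω (m + 1 + k)) ∂P i
        = ∫⁻ ω, (φ ω * ψ 0 (ω (m + 1)))
            * ∏ k ∈ Finset.range n, ψ (k + 1) (ω (m + 1 + 1 + k)) ∂P i := by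
          apply lintegral_congr; intro ω
          have hprod : (∏ k ∈ Finset.range n, ψ (k + 1) (ω (m + 1 + (k + 1))))
              = ∏ k ∈ Finset.range n, ψ (k + 1) (ω (m + 1 + 1 + k)) :=
            Finset.prod_congr rfl fun k _ => by
              rw [show m + 1 + (k + 1) = m + 1 + 1 + k from by omega]
          rw [Finset.prod_range_succ', hprod]
          simp only [Nat.add_zero]
          ring
      _ = ∫⁻ ω, (φ ω * ψ 0 (ω (m + 1)))
            * Kfun q n (fun k => ψ (k + 1)) (ω (m + 1)).1 ∂P i := by
          exact ih (fun k => ψ (k + 1)) (fun k => hψ (k + 1)) (m + 1) i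
            (fun ω => φ ω * ψ 0 (ω (m + 1)))
            (hφ.mul ((hψ 0).comp (measurable_pi_apply (m + 1))))
            (fun ω ω' hag => by
              show φ ω * ψ 0 (ω (m + 1)) = φ ω' * ψ 0 (ω' (m + 1))
              rw [hloc ω ω' (fun k hk => hag k (hk.trans (Nat.le_succ m))),
                hag (m + 1) le_rfl])
      _ = ∫⁻ ω, φ ω * (ψ 0 (ω (m + 1))
            * Kfun q n (fun k => ψ (k + 1)) (ω (m + 1)).1) ∂P i := by
          apply lintegral_congr; intro ω; ring
      _ = ∫⁻ ω, φ ω * ∫⁻ y, ψ 0 y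
            * Kfun q n (fun k => ψ (k + 1)) y.1 ∂stepM q (ω m).1 ∂P i := key
      _ = ∫⁻ ω, φ ω * Kfun q (n + 1) ψ (ω m).1 ∂P i := rfl

lemma lint_coord0 (hP : IsJumpChainLaw q P) (j : S) {G : S × ℝ → ℝ≥0∞} (hG : Measurable G) :
    ∫⁻ ω, G (ω 0) ∂P j = ∫⁻ y, G y ∂initM q j := by
  rw [← hP.2.1 j, lintegral_map hG (measurable_pi_apply 0)]

lemma prod_eval (hP : IsJumpChainLaw q P) (i : S) (n : ℕ) (ψ : ℕ → S × ℝ → ℝ≥0∞)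
    (hψ : ∀ k, Measurable (ψ k)) (φ0 : S × ℝ → ℝ≥0∞) (hφ0 : Measurable φ0) :
    ∫⁻ ω, φ0 (ω 0) * ∏ k ∈ Finset.range n, ψ k (ω (k + 1)) ∂P i
      = (∫⁻ y, φ0 y ∂initM q i) * Kfun q n ψ i := by
  have h1 : ∫⁻ ω, φ0 (ω 0) * ∏ k ∈ Finset.range n, ψ k (ω (k + 1)) ∂P i
      = ∫⁻ ω, φ0 (ω 0) * Kfun q n ψ (ω 0).1 ∂P i := by
    have h := markov_prod hP n ψ hψ 0 i (fun ω => φ0 (ω 0))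
      (hφ0.comp (measurable_pi_apply 0)) (fun ω ω' hag => by
        show φ0 (ω 0) = φ0 (ω' 0); rw [hag 0 le_rfl])
    simpa only [show ∀ k, 0 + 1 + k = k + 1 from fun k => by omega] using h
  rw [h1, lint_coord0 hP i (G := fun y => φ0 y * Kfun q n ψ y.1)
    (hφ0.mul ((measurable_of_countable _).comp measurable_fst)),
    lintegral_initM_mul i hφ0]

lemma chain_prod_eval (hP : IsJumpChainLaw q P) (j : S) (n : ℕ) (ψ : ℕ → S × ℝ → ℝ≥0∞)
    (hψ : ∀ k, Measurable (ψ k)) :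
    ∫⁻ ω, ∏ k ∈ Finset.range (n + 1), ψ k (ω k) ∂P j
      = (∫⁻ y, ψ 0 y ∂initM q j) * Kfun q n (fun k => ψ (k + 1)) j := by
  have h : ∀ ω : ℕ → S × ℝ, ∏ k ∈ Finset.range (n + 1), ψ k (ω k)
      = ψ 0 (ω 0) * ∏ k ∈ Finset.range n, ψ (k + 1) (ω (k + 1)) := by
    intro ω; rw [Finset.prod_range_succ']; ring
  simp only [h]
  exact prod_eval hP j n _ (fun k => hψ (k + 1)) (ψ 0) (hψ 0)

lemma Kfun_succ_eq (i : S) (n : ℕ) (ψ : ℕ → S × ℝ → ℝ≥0∞) (hψ : ∀ k, Measurable (ψ k)) :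
    Kfun q (n + 1) ψ i = ∑ j ∈ Finset.univ.erase i, ENNReal.ofReal (q j i / -(q i i)) *
      ((∫⁻ y, ψ 0 y ∂initM q j) * Kfun q n (fun k => ψ (k + 1)) j) := by
  show (∫⁻ y, ψ 0 y * Kfun q n (fun k => ψ (k + 1)) y.1 ∂stepM q i) = _
  rw [lintegral_stepM]
  exact Finset.sum_congr rfl fun j _ => by rw [lintegral_initM_mul j (hψ 0)]

lemma sum_cc (hq_nonneg : ∀ i j : S, j ≠ i → 0 ≤ q j i)
    (hq_sum : ∀ i : S, ∑ j, q j i = 0) (hq_diag : ∀ i : S, q i i < 0) (i : S) :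
    ∑ j ∈ Finset.univ.erase i, ENNReal.ofReal (q j i / -(q i i)) = 1 := by
  rw [← ENNReal.ofReal_sum_of_nonneg (fun j hj =>
    div_nonneg (hq_nonneg i j (Finset.ne_of_mem_erase hj)) (by linarith [hq_diag i]))]
  rw [← Finset.sum_div]
  have hs : ∑ j ∈ Finset.univ.erase i, q j i = -(q i i) := by
    have h1 := hq_sum i
    have h2 := Finset.add_sum_erase Finset.univ (fun j => q j i) (Finset.mem_univ i)
    linarith
  rw [hs, div_self (by linarith [hq_diag i]), ENNReal.ofReal_one]


lemma nu_eq (hq_nonneg : ∀ i j : S, j ≠ i → 0 ≤ q j i)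
    (hq_sum : ∀ i : S, ∑ j, q j i = 0) (hq_diag : ∀ i : S, q i i < 0)
    (hP : IsJumpChainLaw q P) (i : S) {φ0 : S × ℝ → ℝ≥0∞} (hφ0 : Measurable φ0)
    {C : ℝ≥0∞} (hC : C ≠ ∞) (hbd : ∀ y, φ0 y ≤ C) :
    ((P i).withDensity fun ω => φ0 (ω 0)).map shift
      = ∑ j ∈ Finset.univ.erase i,
          ((∫⁻ y, φ0 y ∂initM q i) * ENNReal.ofReal (q j i / -(q i i))) • P j := by
  classical
  haveI hprob := hP.1
  have hφω : Measurable fun ω : ℕ → S × ℝ => φ0 (ω 0) := hφ0.comp (measurable_pi_apply 0)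
  have hμ1fin : IsFiniteMeasure (((P i).withDensity fun ω => φ0 (ω 0)).map shift) := by
    constructor
    rw [Measure.map_apply measurable_shift MeasurableSet.univ, Set.preimage_univ,
      withDensity_apply _ MeasurableSet.univ, setLIntegral_univ]
    calc ∫⁻ ω, φ0 (ω 0) ∂P i ≤ ∫⁻ _, C ∂P i := lintegral_mono fun ω => hbd _
      _ = C := by simp
      _ < ∞ := hC.lt_top
  refine ext_of_generate_finite _ generateFrom_squareCylinders.symm
    (isPiSystem_squareCylinders (fun _ => MeasurableSpace.isPiSystem_measurableSet)
      (fun _ => by simp)) ?_ ?_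
  · rintro s ⟨t, A, hA, rfl⟩
    simp only [Set.mem_univ_pi, Set.mem_setOf_eq] at hA
    set N := t.sup id with hNdef
    set B : ℕ → Set (S × ℝ) := fun k => if k ∈ t then A k else univ with hB
    have hBmeas : ∀ k, MeasurableSet (B k) := fun k => by
      by_cases h : k ∈ t <;> simp [hB, h, hA k]
    set ψ : ℕ → S × ℝ → ℝ≥0∞ := fun k => (B k).indicator 1 with hψdef
    have hψ : ∀ k, Measurable (ψ k) := fun k => measurable_one.indicator (hBmeas k)
    have hsmeas : MeasurableSet ((t : Set ℕ).pi A) :=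
      MeasurableSet.pi t.countable_toSet fun k _ => hA k
    have hind : ∀ σ : ℕ → S × ℝ,
        Set.indicator ((t : Set ℕ).pi A) 1 σ = ∏ k ∈ Finset.range (N + 1), ψ k (σ k) := by
      intro σ
      by_cases hσ : σ ∈ (t : Set ℕ).pi A
      · rw [Set.indicator_of_mem hσ, Pi.one_apply]
        symm; apply Finset.prod_eq_one; intro k _
        by_cases hkt : k ∈ t
        · have hmem : σ k ∈ B k := by simp only [hB, if_pos hkt]; exact hσ k hkt
          simp [hψdef, Set.indicator_of_mem hmem]
        · have hBk : B k = univ := by rw [hB]; simp [hkt]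
          simp [hψdef, hBk]
      · rw [Set.indicator_of_notMem hσ]
        rw [Set.mem_pi] at hσ; push_neg at hσ
        obtain ⟨k0, hk0t, hk0⟩ := hσ
        symm
        apply Finset.prod_eq_zero (i := k0)
        · refine Finset.mem_range.2 ?_
          have h := Finset.le_sup (f := id) hk0t
          simp only [id_eq] at h
          omega
        · have hnot : σ k0 ∉ B k0 := by simp only [hB, if_pos (Finset.mem_coe.1 hk0t)]; exact hk0
          simp [hψdef, Set.indicator_of_notMem hnot]
    have hLHS : (((P i).withDensity fun ω => φ0 (ω 0)).map shift) ((t : Set ℕ).pi A)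
        = (∫⁻ y, φ0 y ∂initM q i) * Kfun q (N + 1) ψ i := by
      rw [Measure.map_apply measurable_shift hsmeas,
        withDensity_apply _ (measurable_shift hsmeas),
        ← lintegral_indicator (measurable_shift hsmeas)]
      have hpt : ∀ ω : ℕ → S × ℝ,
          Set.indicator (shift ⁻¹' ((t : Set ℕ).pi A)) (fun ω => φ0 (ω 0)) ω
            = φ0 (ω 0) * ∏ k ∈ Finset.range (N + 1), ψ k (ω (k + 1)) := by
        intro ω
        have h2 : (∏ k ∈ Finset.range (N + 1), ψ k (shift ω k))
            = ∏ k ∈ Finset.range (N + 1), ψ k (ω (k + 1)) := rfl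
        by_cases hω : shift ω ∈ (t : Set ℕ).pi A
        · rw [Set.indicator_of_mem (Set.mem_preimage.2 hω), ← h2, ← hind (shift ω),
            Set.indicator_of_mem hω, Pi.one_apply, mul_one]
        · rw [Set.indicator_of_notMem (fun hc => hω (Set.mem_preimage.1 hc)), ← h2,
            ← hind (shift ω), Set.indicator_of_notMem hω, mul_zero]
      rw [lintegral_congr hpt, prod_eval hP i (N + 1) ψ hψ φ0 hφ0]
    have hRHS : ∀ j : S, (P j) ((t : Set ℕ).pi A)
        = (∫⁻ y, ψ 0 y ∂initM q j) * Kfun q N (fun k => ψ (k + 1)) j := by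
      intro j
      rw [← lintegral_indicator_one hsmeas, lintegral_congr hind,
        chain_prod_eval hP j N ψ hψ]
    rw [hLHS, Measure.finset_sum_apply]
    rw [Kfun_succ_eq i N ψ hψ, Finset.mul_sum]
    refine Finset.sum_congr rfl fun j _ => ?_
    rw [Measure.smul_apply, hRHS j, smul_eq_mul]
    ring
  · rw [Measure.map_apply measurable_shift MeasurableSet.univ, Set.preimage_univ,
      withDensity_apply _ MeasurableSet.univ, setLIntegral_univ,
      lint_coord0 hP i hφ0, Measure.finset_sum_apply]
    have h1 : ∀ j ∈ Finset.univ.erase i,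
        (((∫⁻ y, φ0 y ∂initM q i) * ENNReal.ofReal (q j i / -(q i i))) • P j) univ
          = (∫⁻ y, φ0 y ∂initM q i) * ENNReal.ofReal (q j i / -(q i i)) := by
      intro j _
      rw [Measure.smul_apply, measure_univ, smul_eq_mul, mul_one]
    rw [Finset.sum_congr rfl h1, ← Finset.mul_sum,
      sum_cc hq_nonneg hq_sum hq_diag i, mul_one]

lemma step_decomp (hq_nonneg : ∀ i j : S, j ≠ i → 0 ≤ q j i)
    (hq_sum : ∀ i : S, ∑ j, q j i = 0) (hq_diag : ∀ i : S, q i i < 0)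
    (hP : IsJumpChainLaw q P) (i : S) {Ψ : (ℕ → S × ℝ) → ℝ≥0∞} (hΨ : Measurable Ψ)
    {φ0 : S × ℝ → ℝ≥0∞} (hφ0 : Measurable φ0) :
    ∫⁻ ω, φ0 (ω 0) * Ψ (shift ω) ∂P i
      = (∫⁻ y, φ0 y ∂initM q i) * ∑ j ∈ Finset.univ.erase i,
          ENNReal.ofReal (q j i / -(q i i)) * ∫⁻ ω, Ψ ω ∂P j := by
  have hsup : ∀ a : ℝ≥0∞, (⨆ k : ℕ, min a k) = a := by
    intro a
    apply le_antisymm (iSup_le fun k => min_le_left _ _)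
    rcases eq_or_ne a ∞ with rfl | ha
    · have h : ∀ k : ℕ, min (⊤ : ℝ≥0∞) (k : ℝ≥0∞) = (k : ℝ≥0∞) :=
        fun k => min_eq_right le_top
      rw [iSup_congr h, ENNReal.iSup_natCast]
    · obtain ⟨k, hk⟩ := ENNReal.exists_nat_gt ha
      exact le_iSup_of_le k (le_of_eq (min_eq_left hk.le).symm)
  have key : ∀ k : ℕ, ∫⁻ ω, min (φ0 (ω 0)) k * Ψ (shift ω) ∂P i
      = (∫⁻ y, min (φ0 y) k ∂initM q i) * ∑ j ∈ Finset.univ.erase i,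
          ENNReal.ofReal (q j i / -(q i i)) * ∫⁻ ω, Ψ ω ∂P j := by
    intro k
    have hm : Measurable fun y => min (φ0 y) (k : ℝ≥0∞) := hφ0.min measurable_const
    have hν := nu_eq hq_nonneg hq_sum hq_diag hP i hm (ENNReal.natCast_ne_top k)
      (fun y => min_le_right _ _)
    calc ∫⁻ ω, min (φ0 (ω 0)) k * Ψ (shift ω) ∂P i
        = ∫⁻ ω, Ψ (shift ω) ∂((P i).withDensity fun ω => min (φ0 (ω 0)) k) := by
          rw [lintegral_withDensity_eq_lintegral_mul (P i)
            (f := fun ω : ℕ → S × ℝ => min (φ0 (ω 0)) (k : ℝ≥0∞))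
            (by exact hm.comp (measurable_pi_apply 0))
            (g := fun ω => Ψ (shift ω)) (by exact hΨ.comp measurable_shift)]
          exact lintegral_congr fun ω => rfl
      _ = ∫⁻ ω, Ψ ω ∂(((P i).withDensity fun ω => min (φ0 (ω 0)) k).map shift) :=
          (lintegral_map hΨ measurable_shift).symm
      _ = ∑ j ∈ Finset.univ.erase i,
            ((∫⁻ y, min (φ0 y) k ∂initM q i) * ENNReal.ofReal (q j i / -(q i i)))
              * ∫⁻ ω, Ψ ω ∂P j := by
          rw [hν, lintegral_finset_sum_measure]
          exact Finset.sum_congr rfl fun j _ => lintegral_smul_measure _ _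
      _ = (∫⁻ y, min (φ0 y) k ∂initM q i) * ∑ j ∈ Finset.univ.erase i,
            ENNReal.ofReal (q j i / -(q i i)) * ∫⁻ ω, Ψ ω ∂P j := by
          rw [Finset.mul_sum]
          exact Finset.sum_congr rfl fun j _ => by ring
  have hfmeas : ∀ kk : ℕ, Measurable fun ω : ℕ → S × ℝ =>
      min (φ0 (ω 0)) (kk : ℝ≥0∞) * Ψ (shift ω) := fun kk =>
    ((hφ0.comp (measurable_coord 0)).min measurable_const).mul (hΨ.comp measurable_shift)
  calc ∫⁻ ω, φ0 (ω 0) * Ψ (shift ω) ∂P i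
      = ⨆ k : ℕ, ∫⁻ ω, min (φ0 (ω 0)) k * Ψ (shift ω) ∂P i := by
        rw [← lintegral_iSup
          (f := fun (k : ℕ) (ω : ℕ → S × ℝ) => min (φ0 (ω 0)) (k : ℝ≥0∞) * Ψ (shift ω))
          (fun k => hfmeas k)
          (fun k1 k2 h ω => mul_le_mul'
            (min_le_min le_rfl (by exact_mod_cast h)) le_rfl)]
        apply lintegral_congr; intro ω
        rw [← ENNReal.iSup_mul, hsup]
    _ = ⨆ k : ℕ, (∫⁻ y, min (φ0 y) k ∂initM q i) * ∑ j ∈ Finset.univ.erase i,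
          ENNReal.ofReal (q j i / -(q i i)) * ∫⁻ ω, Ψ ω ∂P j := by
        exact iSup_congr key
    _ = (⨆ k : ℕ, ∫⁻ y, min (φ0 y) k ∂initM q i) * ∑ j ∈ Finset.univ.erase i,
          ENNReal.ofReal (q j i / -(q i i)) * ∫⁻ ω, Ψ ω ∂P j := by
        rw [ENNReal.iSup_mul]
    _ = (∫⁻ y, φ0 y ∂initM q i) * ∑ j ∈ Finset.univ.erase i,
          ENNReal.ofReal (q j i / -(q i i)) * ∫⁻ ω, Ψ ω ∂P j := by
        congr 1
        rw [← lintegral_iSup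
          (f := fun (k : ℕ) (y : S × ℝ) => min (φ0 y) (k : ℝ≥0∞))
          (fun k => by exact hφ0.min measurable_const)
          (fun k1 k2 h y => min_le_min le_rfl (by exact_mod_cast h))]
        exact lintegral_congr fun y => hsup (φ0 y)


variable (lam : ℝ) (c : S → ℝ) (g : ℝ)

def en (n : ℕ) (ω : ℕ → S × ℝ) : ℝ≥0∞ :=
  ENNReal.ofReal (Real.exp (lam * ∑ m ∈ Finset.range n, (c (ω m).1 - g) * (ω m).2))

def ffn (y : S × ℝ) : ℝ≥0∞ :=
  ENNReal.ofReal (Real.exp (lam * ((c y.1 - g) * y.2)))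

def Wlim (ω : ℕ → S × ℝ) : ℝ≥0∞ := limsup (fun n => en lam c g n ω) atTop

open Classical in
def Vf (z : S) (ω : ℕ → S × ℝ) : ℝ≥0∞ :=
  if (ω 0).1 = z then 1 else W z lam c g ω

lemma measurable_en (n : ℕ) : Measurable (en lam c g n) := by
  apply Measurable.ennreal_ofReal
  apply Real.continuous_exp.measurable.comp
  apply Measurable.const_mul
  apply Finset.measurable_sum
  intro m _
  exact (((measurable_of_countable c).comp
    (measurable_fst.comp (measurable_coord m))).sub measurable_const).mul
    (measurable_snd.comp (measurable_coord m))

lemma measurable_ffn : Measurable (ffn lam c g (S := S)) := by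
  apply Measurable.ennreal_ofReal
  apply Real.continuous_exp.measurable.comp
  apply Measurable.const_mul
  exact (((measurable_of_countable c).comp measurable_fst).sub measurable_const).mul
    measurable_snd

lemma measurable_Wlim : Measurable (Wlim lam c g (S := S)) :=
  Measurable.limsup fun n => measurable_en lam c g n

def Nset (z : S) (n : ℕ) : Set (ℕ → S × ℝ) :=
  {ω | (1 ≤ n ∧ (ω n).1 = z) ∧ ∀ m < n, ¬(1 ≤ m ∧ (ω m).1 = z)}

def Eset (z : S) : Set (ℕ → S × ℝ) := {ω | ∃ m, 1 ≤ m ∧ (ω m).1 = z}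

lemma measurableSet_coordEq (m : ℕ) (z : S) :
    MeasurableSet {ω : ℕ → S × ℝ | (ω m).1 = z} :=
  (measurable_fst.comp (measurable_coord m)) (measurableSet_singleton z)

lemma measurableSet_Nset (z : S) (n : ℕ) : MeasurableSet (Nset z n) := by
  have h2 : MeasurableSet {ω : ℕ → S × ℝ | ∀ m < n, ¬(1 ≤ m ∧ (ω m).1 = z)} := by
    have he : {ω : ℕ → S × ℝ | ∀ m < n, ¬(1 ≤ m ∧ (ω m).1 = z)}
        = ⋂ m ∈ Set.Iio n, {ω : ℕ → S × ℝ | ¬(1 ≤ m ∧ (ω m).1 = z)} := by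
      ext ω; simp
    rw [he]
    refine MeasurableSet.biInter (to_countable _) fun m _ => ?_
    by_cases h1 : 1 ≤ m
    · have he2 : {ω : ℕ → S × ℝ | ¬(1 ≤ m ∧ (ω m).1 = z)}
          = {ω : ℕ → S × ℝ | (ω m).1 = z}ᶜ := by ext ω; simp [h1]
      rw [he2]; exact (measurableSet_coordEq m z).compl
    · have he2 : {ω : ℕ → S × ℝ | ¬(1 ≤ m ∧ (ω m).1 = z)} = univ := by
        ext ω; simp [h1]
      rw [he2]; exact MeasurableSet.univ
  by_cases h1 : 1 ≤ n
  · have he : Nset z n = {ω : ℕ → S × ℝ | (ω n).1 = z}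
        ∩ {ω : ℕ → S × ℝ | ∀ m < n, ¬(1 ≤ m ∧ (ω m).1 = z)} := by
      ext ω; simp [Nset, h1]
    rw [he]; exact (measurableSet_coordEq n z).inter h2
  · have he : Nset z n = ∅ := by ext ω; simp [Nset, h1]
    rw [he]; exact MeasurableSet.empty

lemma measurableSet_Eset (z : S) : MeasurableSet (Eset z) := by
  have he : Eset z = ⋃ m, ⋃ _ : 1 ≤ m, {ω : ℕ → S × ℝ | (ω m).1 = z} := by
    ext ω; simp [Eset]
  rw [he]
  exact MeasurableSet.iUnion fun m => MeasurableSet.iUnion fun _ =>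
    measurableSet_coordEq m z

lemma W_repr (z : S) : W z lam c g = fun ω =>
    (∑' n : ℕ, (Nset z n).indicator (en lam c g n) ω)
      + (Eset z)ᶜ.indicator (Wlim lam c g) ω := by
  classical
  funext ω
  by_cases h : ∃ m, 1 ≤ m ∧ (ω m).1 = z
  · unfold W
    rw [dif_pos h]
    have hmem : ω ∈ Nset z (Nat.find h) :=
      ⟨Nat.find_spec h, fun m hm => Nat.find_min h hm⟩
    have hnot : ω ∉ (Eset z)ᶜ := fun hc => hc h
    rw [Set.indicator_of_notMem hnot, add_zero]
    rw [tsum_eq_single (Nat.find h) ?_]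
    · rw [Set.indicator_of_mem hmem]; rfl
    · intro n hn
      apply Set.indicator_of_notMem
      intro hmem'
      exact hn ((Nat.find_eq_iff h).2 ⟨hmem'.1, hmem'.2⟩).symm
  · unfold W
    rw [dif_neg h]
    have h0 : ∀ n, (Nset z n).indicator (en lam c g n) ω = 0 := fun n =>
      Set.indicator_of_notMem (fun hmem => h ⟨n, hmem.1⟩) _
    have hmem : ω ∈ (Eset z)ᶜ := h
    rw [tsum_congr h0, tsum_zero, zero_add, Set.indicator_of_mem hmem]
    rfl

lemma measurable_W (z : S) : Measurable (W z lam c g) := by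
  rw [W_repr lam c g z]
  refine Measurable.add ?_ ?_
  · exact Measurable.ennreal_tsum fun n =>
      (measurable_en lam c g n).indicator (measurableSet_Nset z n)
  · exact (measurable_Wlim lam c g).indicator (measurableSet_Eset z).compl

lemma measurable_Vf (z : S) : Measurable (Vf lam c g z) := by
  unfold Vf
  exact Measurable.ite (measurableSet_coordEq 0 z) measurable_const
    (measurable_W lam c g z)

lemma en_succ (n : ℕ) (ω : ℕ → S × ℝ) :
    en lam c g (n + 1) ω = ffn lam c g (ω 0) * en lam c g n (shift ω) := by
  unfold en ffn shift
  rw [Finset.sum_range_succ', mul_add, Real.exp_add,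
    mul_comm (Real.exp _) (Real.exp _), ENNReal.ofReal_mul (Real.exp_nonneg _)]

lemma W_decomp (z : S) (ω : ℕ → S × ℝ) :
    W z lam c g ω = ffn lam c g (ω 0) * Vf lam c g z (shift ω) := by
  classical
  by_cases h1 : (ω 1).1 = z
  · have h : ∃ m, 1 ≤ m ∧ (ω m).1 = z := ⟨1, le_refl 1, h1⟩
    have hfind : Nat.find h = 1 := by
      rw [Nat.find_eq_iff]
      exact ⟨⟨le_refl 1, h1⟩, fun m hm hc => by omega⟩
    have hV : Vf lam c g z (shift ω) = 1 := by
      unfold Vf; rw [if_pos (by exact h1 : (shift ω 0).1 = z)]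
    unfold W
    rw [dif_pos h, hfind, hV, mul_one]
    unfold ffn
    rw [Finset.sum_range_one]
  · by_cases h : ∃ m, 1 ≤ m ∧ (ω m).1 = z
    · obtain ⟨m0, hm01, hm0z⟩ := h
      have h : ∃ m, 1 ≤ m ∧ (ω m).1 = z := ⟨m0, hm01, hm0z⟩
      have h' : ∃ m, 1 ≤ m ∧ (shift ω m).1 = z := by
        have hm0ne : m0 ≠ 1 := fun e => h1 (e ▸ hm0z)
        refine ⟨m0 - 1, by omega, ?_⟩
        show (ω (m0 - 1 + 1)).1 = z
        rw [show m0 - 1 + 1 = m0 from by omega]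
        exact hm0z
      have hVW : Vf lam c g z (shift ω) = W z lam c g (shift ω) := by
        unfold Vf; rw [if_neg (by exact h1 : ¬(shift ω 0).1 = z)]
      rw [hVW]
      have h2 : 2 ≤ Nat.find h := by
        have hs := Nat.find_spec h
        have hne : Nat.find h ≠ 1 := fun e => h1 (by rw [← e]; exact hs.2)
        have h1le : 1 ≤ Nat.find h := hs.1
        omega
      have hfind' : Nat.find h' = Nat.find h - 1 := by
        rw [Nat.find_eq_iff]
        constructor
        · refine ⟨by omega, ?_⟩
          show (ω (Nat.find h - 1 + 1)).1 = z
          rw [show Nat.find h - 1 + 1 = Nat.find h from by omega]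
          exact (Nat.find_spec h).2
        · intro m hm hc
          exact Nat.find_min h (show m + 1 < Nat.find h from by omega)
            ⟨by omega, hc.2⟩
      unfold W
      rw [dif_pos h, dif_pos h']
      show en lam c g (Nat.find h) ω = ffn lam c g (ω 0) * en lam c g (Nat.find h') (shift ω)
      rw [hfind', show Nat.find h = (Nat.find h - 1) + 1 from by omega] 
      rw [show Nat.find h - 1 + 1 - 1 = Nat.find h - 1 from by omega]
      exact en_succ lam c g (Nat.find h - 1) ω
    · have h' : ¬∃ m, 1 ≤ m ∧ (shift ω m).1 = z := by
        rintro ⟨m, hm1, hmz⟩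
        exact h ⟨m + 1, by omega, hmz⟩
      have hVW : Vf lam c g z (shift ω) = W z lam c g (shift ω) := by
        unfold Vf; rw [if_neg (by exact h1 : ¬(shift ω 0).1 = z)]
      rw [hVW]
      unfold W
      rw [dif_neg h, dif_neg h']
      show Wlim lam c g ω = ffn lam c g (ω 0) * Wlim lam c g (shift ω)
      unfold Wlim
      rw [← limsup_nat_add (fun n => en lam c g n ω) 1]
      have hpt : (fun n => en lam c g (n + 1) ω)
          = fun n => ffn lam c g (ω 0) * en lam c g n (shift ω) := by
        funext n; exact en_succ lam c g n ω
      rw [hpt]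
      exact ENNReal.limsup_const_mul_of_ne_top ENNReal.ofReal_ne_top


lemma lintegral_ffn_initM (hq_diag : ∀ i : S, q i i < 0) (i : S) :
    ∫⁻ y, ffn lam c g y ∂initM q i
      = ENNReal.ofReal (-(q i i)) * Qint lam c q i g := by
  have hr : (0 : ℝ) ≤ -(q i i) := by linarith [hq_diag i]
  rw [lintegral_initM i (measurable_ffn lam c g), expM]
  have hdens : Measurable fun t : ℝ =>
      ENNReal.ofReal (-(q i i) * Real.exp (-(-(q i i) * t))) := by
    apply Measurable.ennreal_ofReal
    exact measurable_const.mul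
      (Real.continuous_exp.measurable.comp (measurable_id.const_mul _).neg)
  rw [lintegral_withDensity_eq_lintegral_mul (volume.restrict (Ioi (0:ℝ))) hdens
    (g := fun t => ffn lam c g (i, t))
    (by exact (measurable_ffn lam c g).comp (measurable_pair i))]
  have hpt : ∀ t : ℝ,
      ENNReal.ofReal (-(q i i) * Real.exp (-(-(q i i) * t))) * ffn lam c g (i, t)
        = ENNReal.ofReal (-(q i i))
            * ENNReal.ofReal (Real.exp ((lam * (c i - g) + q i i) * t)) := by
    intro t
    show ENNReal.ofReal (-(q i i) * Real.exp (-(-(q i i) * t)))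
        * ENNReal.ofReal (Real.exp (lam * ((c i - g) * t))) = _
    rw [ENNReal.ofReal_mul hr, mul_assoc, ← ENNReal.ofReal_mul (Real.exp_nonneg _),
      ← Real.exp_add, show -(-(q i i) * t) + lam * ((c i - g) * t)
        = (lam * (c i - g) + q i i) * t from by ring]
  simp only [Pi.mul_apply]
  rw [lintegral_congr fun t => hpt t]
  rw [lintegral_const_mul _ (by
    apply Measurable.ennreal_ofReal
    exact Real.continuous_exp.measurable.comp (measurable_id.const_mul _))]
  rfl

lemma central (hq_nonneg : ∀ i j : S, j ≠ i → 0 ≤ q j i)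
    (hq_sum : ∀ i : S, ∑ j, q j i = 0) (hq_diag : ∀ i : S, q i i < 0)
    (hP : IsJumpChainLaw q P) (z : S) (i : S) :
    ∫⁻ ω, W z lam c g ω ∂P i
      = Qint lam c q i g * ∑ j ∈ Finset.univ.erase i, ENNReal.ofReal (q j i) *
          (if j = z then 1 else ∫⁻ ω, W z lam c g ω ∂P j) := by
  have h1 : ∫⁻ ω, W z lam c g ω ∂P i
      = ∫⁻ ω, ffn lam c g (ω 0) * Vf lam c g z (shift ω) ∂P i :=
    lintegral_congr fun ω => W_decomp lam c g z ω
  rw [h1, step_decomp hq_nonneg hq_sum hq_diag hP i (measurable_Vf lam c g z)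
    (measurable_ffn lam c g)]
  have hV : ∀ j : S, ∫⁻ ω, Vf lam c g z ω ∂P j
      = if j = z then 1 else ∫⁻ ω, W z lam c g ω ∂P j := by
    intro j
    haveI := hP.1 j
    have hms : MeasurableSet {y : S × ℝ | y.1 ≠ j} :=
      (measurable_fst (measurableSet_singleton j)).compl
    have hae : ∀ᵐ ω ∂P j, (ω 0).1 = j := by
      rw [ae_iff]
      have hpre : {ω : ℕ → S × ℝ | ¬(ω 0).1 = j}
          = (fun ω : ℕ → S × ℝ => ω 0) ⁻¹' {y : S × ℝ | y.1 ≠ j} := rfl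
      rw [hpre, ← Measure.map_apply (measurable_coord 0) hms, hP.2.1 j, initM,
        Measure.map_apply (measurable_pair j) hms]
      have hemp : (fun t : ℝ => (j, t)) ⁻¹' {y : S × ℝ | y.1 ≠ j} = ∅ := by
        ext t; simp
      rw [hemp, measure_empty]
    have hcong : Vf lam c g z
        =ᵐ[P j] fun ω => if j = z then (1 : ℝ≥0∞) else W z lam c g ω := by
      filter_upwards [hae] with ω hω
      unfold Vf; rw [hω]
    rw [lintegral_congr_ae hcong]
    by_cases hjz : j = z
    · subst hjz; simp [measure_univ]
    · simp [hjz]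
  have hsum : (∑ j ∈ Finset.univ.erase i,
        ENNReal.ofReal (q j i / -(q i i)) * ∫⁻ ω, Vf lam c g z ω ∂P j)
      = ∑ j ∈ Finset.univ.erase i, ENNReal.ofReal (q j i / -(q i i))
          * (if j = z then 1 else ∫⁻ ω, W z lam c g ω ∂P j) :=
    Finset.sum_congr rfl fun j _ => by rw [hV j]
  rw [hsum, lintegral_ffn_initM lam c g hq_diag i]
  rw [mul_comm (ENNReal.ofReal (-(q i i))) (Qint lam c q i g), mul_assoc,
    Finset.mul_sum]
  congr 1
  refine Finset.sum_congr rfl fun j hj => ?_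
  have hne : -(q i i) ≠ 0 := by linarith [hq_diag i]
  rw [← mul_assoc, ← ENNReal.ofReal_mul (by linarith [hq_diag i] : (0:ℝ) ≤ -(q i i)),
    show -(q i i) * (q j i / -(q i i)) = q j i from by
      rw [mul_comm]; exact div_mul_cancel₀ _ hne]


/-- **Theorem 3.1(b)**: the first-passage values `v_g(i) = E_i[W_g]` of the jump chain satisfy
`v_g(i) = Q(i,g)(q(z|i) + Σ_{j∉{i,z}} v_g(j) q(j|i))` for `i ≠ z` and
`v_g(z) = Q(z,g) Σ_{j≠z} v_g(j) q(j|z)`, as identities in `[0,∞]` (convention `0·∞ = 0`). -/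
theorem stmt8 {S : Type*} [Fintype S] [DecidableEq S] [Nonempty S] [MeasurableSpace S]
    [MeasurableSingletonClass S]
    (z : S) (lam : ℝ) (hlam : 0 < lam) (q : S → S → ℝ) (c : S → ℝ)
    (hq_nonneg : ∀ i j : S, j ≠ i → 0 ≤ q j i)
    (hq_sum : ∀ i : S, ∑ j, q j i = 0)
    (hq_diag : ∀ i : S, q i i < 0)
    (P : S → Measure (ℕ → S × ℝ)) (hP : IsJumpChainLaw q P) (g : ℝ) :
    (∀ i : S, i ≠ z →
      ∫⁻ ω, W z lam c g ω ∂(P i) =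
        Qint lam c q i g *
          (ENNReal.ofReal (q z i) +
            ∑ j ∈ (Finset.univ.erase i).erase z,
              (∫⁻ ω, W z lam c g ω ∂(P j)) * ENNReal.ofReal (q j i))) ∧
    ∫⁻ ω, W z lam c g ω ∂(P z) =
      Qint lam c q z g *
        ∑ j ∈ Finset.univ.erase z,
          (∫⁻ ω, W z lam c g ω ∂(P j)) * ENNReal.ofReal (q j z) := by
  constructor
  · intro i hiz
    rw [central lam c g hq_nonneg hq_sum hq_diag hP z i]
    congr 1
    have hz : z ∈ Finset.univ.erase i :=
      Finset.mem_erase.2 ⟨Ne.symm hiz, Finset.mem_univ z⟩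
    rw [← Finset.add_sum_erase _ _ hz]
    congr 1
    · simp
    · refine Finset.sum_congr rfl fun j hj => ?_
      rw [if_neg (Finset.mem_erase.1 hj).1, mul_comm]
  · rw [central lam c g hq_nonneg hq_sum hq_diag hP z z]
    congr 1
    refine Finset.sum_congr rfl fun j hj => ?_
    rw [if_neg (Finset.mem_erase.1 hj).1, mul_comm]



end RiskCTMDP8
end
end
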